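/- arXiv:2009.04048 — 2 statements merged into one kernel-verified Lean document; each statement's English description precedes it below -/
import Mathlib

section
/- If u is a solution of the 1-Laplace equation in the sense of the paper and its trace on Γ equals f, then u is a function of φ-least gradient: for every v ∈ BV(Ω) with trace equal to the trace of u on ∂Ω, ∫_Ω |Du|_φ ≤ ∫_Ω |Dv|_φ. -/
open Set MeasureTheory
open scoped RealInnerProductSpace

/-- `z` is divergence-free in `𝒟'(Ω)`. -/
def DivFreeOn {N : ℕ} (Ω : Set (EuclideanSpace ℝ (Fin N)))
    (z : EuclideanSpace ℝ (Fin N) → EuclideanSpace ℝ (Fin N)) : Prop :=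
  ∀ ϕ : EuclideanSpace ℝ (Fin N) → ℝ, ContDiff ℝ (⊤ : ℕ∞) ϕ → HasCompactSupport ϕ →
    tsupport ϕ ⊆ Ω → ∫ x in Ω, ⟪z x, gradient ϕ x⟫ = 0

/-- A solution of the 1-Laplace equation (in the sense of the paper)
whose trace on Γ equals f is a function of φ-least gradient: any BV competitor with
the same trace on ∂Ω has larger φ-total variation. The anisotropic BV framework
(φ-total variation `TVm`, Anzellotti pairing `pair`, normal trace `nt`, BV trace `T`,
boundary measure `σ`) is given abstractly together with Anzellotti's Green formula
and the pairing bound. -/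
theorem oneLaplace_implies_least_gradient {N : ℕ}
    (Ω : Set (EuclideanSpace ℝ (Fin N))) (hΩo : IsOpen Ω) (hΩb : Bornology.IsBounded Ω)
    (Γ : Set (EuclideanSpace ℝ (Fin N))) (hΓ : Γ ⊆ frontier Ω)
    (hΓopen : ∃ U, IsOpen U ∧ Γ = U ∩ frontier Ω)
    (σ : Measure (EuclideanSpace ℝ (Fin N)))
    (hσ : σ = (μH[(N : ℝ) - 1]).restrict (frontier Ω)) (hσfin : σ univ ≠ ⊤)
    -- abstract anisotropic BV framework
    (BV : (EuclideanSpace ℝ (Fin N) → ℝ) → Prop)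
    (TVm : (EuclideanSpace ℝ (Fin N) → ℝ) → Set (EuclideanSpace ℝ (Fin N)) → ℝ)
    (pair : (EuclideanSpace ℝ (Fin N) → EuclideanSpace ℝ (Fin N)) →
      (EuclideanSpace ℝ (Fin N) → ℝ) → Set (EuclideanSpace ℝ (Fin N)) → ℝ)
    (nt : (EuclideanSpace ℝ (Fin N) → EuclideanSpace ℝ (Fin N)) →
      EuclideanSpace ℝ (Fin N) → ℝ)
    (T : (EuclideanSpace ℝ (Fin N) → ℝ) → EuclideanSpace ℝ (Fin N) → ℝ)
    (φ φ0 : EuclideanSpace ℝ (Fin N) → EuclideanSpace ℝ (Fin N) → ℝ)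
    (w : EuclideanSpace ℝ (Fin N) → ℝ)  -- w x = φ(x, ν^Ω(x))
    -- Anzellotti's Green formula (for divergence-free fields) and the pairing bound
    (hGreen : ∀ z v, BV v → DivFreeOn Ω z →
      pair z v Ω = ∫ x, nt z x * T v x ∂σ)
    (hBound : ∀ z v, BV v → (∀ x ∈ Ω, φ0 x (z x) ≤ 1) → |pair z v Ω| ≤ TVm v Ω)
    -- u solves the 1-Laplace equation with datum f on Γ, witnessed by z
    (u : EuclideanSpace ℝ (Fin N) → ℝ) (hu : BV u)
    (f : EuclideanSpace ℝ (Fin N) → ℝ)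
    (z : EuclideanSpace ℝ (Fin N) → EuclideanSpace ℝ (Fin N))
    (hz1 : ∀ x ∈ Ω, φ0 x (z x) ≤ 1)
    (hzdiv : DivFreeOn Ω z)
    (hzpair : ∀ B ⊆ Ω, MeasurableSet B → pair z u B = TVm u B)
    (hsign : ∀ᵐ x ∂σ.restrict Γ,
      |nt z x| ≤ w x ∧ nt z x * (f x - T u x) = w x * |f x - T u x|)
    (hnt0 : ∀ᵐ x ∂σ.restrict (frontier Ω \ Γ), nt z x = 0)
    -- the trace of u on Γ equals f
    (htr : ∀ᵐ x ∂σ.restrict Γ, T u x = f x) :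
    ∀ v, BV v → T v =ᵐ[σ] T u → TVm u Ω ≤ TVm v Ω := by
  intro v hv htv
  have h1 := hzpair Ω (subset_refl _) hΩo.measurableSet
  have h2 := hGreen z u hu hzdiv
  have h3 := hGreen z v hv hzdiv
  have h4 : ∫ x, nt z x * T v x ∂σ = ∫ x, nt z x * T u x ∂σ :=
    integral_congr_ae (htv.mono fun x hx => by dsimp only; rw [hx])
  calc TVm u Ω = pair z v Ω := by rw [← h1, h2, h3, h4]
    _ ≤ |pair z v Ω| := le_abs_self _
    _ ≤ TVm v Ω := hBound z v hv hz1
end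

section
/- Truncation-cut comparison lemma (core of the continuity proofs): let Ω = Ω⁺ ∪ γ ∪ Ω⁻ be a decomposition of Ω by a set γ of finite H^{N−1}-measure with Ω± open, and let u ∈ BV(Ω) have one-sided traces u⁺, u⁻ on γ with |u⁺ − (t+s)/2| < |u⁺ − u⁻| H^{N−1}-a.e. on a subset of γ of positive measure and |u⁺ − (t+s)/2| ≤ |u⁺ − u⁻| a.e. on γ. If u is not constant ≡ (t+s)/2 on Ω⁻, then the function v equal to u on Ω⁺ and to (t+s)/2 on Ω⁻ satisfies ∫_Ω |Dv|_φ < ∫_Ω |Du|_φ. -/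
open Set MeasureTheory
open scoped Classical

/-!
Subtracting the two jump formulas gives
`TVu - TVv = TVm + ∫ w (|u⁺ - u⁻| - |u⁺ - (t+s)/2|) dσ`. The first term is nonnegative, and the
integrand is nonnegative a.e. and, since `w ≥ λ > 0`, positive wherever the comparison is strict,
i.e. on a set of positive `σ`-measure; so the integral is positive.
-/

section

variable {α : Type*} [MeasurableSpace α] {μ : Measure α}

theorem integral_lt_integral_of_ae_le_of_measure_setOf_lt_ne_zero {f g : α → ℝ}
    (hf : Integrable f μ) (hg : Integrable g μ) (hle : f ≤ᵐ[μ] g)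
    (hlt : μ {x | f x < g x} ≠ 0) :
    ∫ x, f x ∂μ < ∫ x, g x ∂μ := by
  rw [← sub_pos, ← integral_sub hg hf, integral_pos_iff_support_of_nonneg_ae
    (hle.mono fun x => sub_nonneg.2) (hg.sub hf)]
  refine pos_iff_ne_zero.2 (mt (measure_mono_null ?_) hlt)
  exact fun x hx => (sub_pos.2 hx).ne'

theorem measure_setOf_mul_lt_mul_ne_zero {w a b : α → ℝ} (hw : ∀ᵐ x ∂μ, 0 < w x)
    (hlt : μ {x | a x < b x} ≠ 0) :
    μ {x | w x * a x < w x * b x} ≠ 0 := by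
  have hw_conull : μ {x | 0 < w x}ᶜ = 0 := ae_iff.1 hw
  rw [← measure_inter_conull hw_conull] at hlt
  exact mt (measure_mono_null fun x hx => mul_lt_mul_of_pos_left hx.1 (id hx.2 : 0 < w x)) hlt

end

theorem truncation_cut_comparison_general {N : ℕ}
    -- the surface measure on the interface γ, of finite total mass
    (σ : Measure (EuclideanSpace ℝ (Fin N)))
    -- anisotropic weight w x = φ(x, ν^γ(x)), bounded below by the ellipticity
    -- constant λ of the metric integrand
    (w : EuclideanSpace ℝ (Fin N) → ℝ)
    (lam : ℝ) (hlam : 0 < lam) (hw : ∀ᵐ x ∂σ, lam ≤ w x)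
    -- t < s and the one-sided traces u⁺, u⁻ of u on γ, with u⁻ ≤ t < s ≤ u⁺
    (t s : ℝ)
    (up um : EuclideanSpace ℝ (Fin N) → ℝ)
    -- the total variations over Ω, Ω⁺, Ω⁻ and the jump formulas
    (TVu TVv TVp TVm : ℝ) (hTVm : 0 ≤ TVm)
    (hintu : Integrable (fun x => w x * |up x - um x|) σ)
    (hintv : Integrable (fun x => w x * |up x - (t + s) / 2|) σ)
    (hjumpu : TVu = TVp + (∫ x, w x * |up x - um x| ∂σ) + TVm)
    (hjumpv : TVv = TVp + ∫ x, w x * |up x - (t + s) / 2| ∂σ)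
    -- the comparison hypotheses
    (hae : ∀ᵐ x ∂σ, |up x - (t + s) / 2| ≤ |up x - um x|)
    (hstrict : σ {x | |up x - (t + s) / 2| < |up x - um x|} ≠ 0) :
    TVv < TVu := by
  have hw_pos : ∀ᵐ x ∂σ, 0 < w x := hw.mono fun x hx => hlam.trans_le hx
  have hjump_lt : ∫ x, w x * |up x - (t + s) / 2| ∂σ < ∫ x, w x * |up x - um x| ∂σ := by
    refine integral_lt_integral_of_ae_le_of_measure_setOf_lt_ne_zero hintv hintu ?_
      (measure_setOf_mul_lt_mul_ne_zero hw_pos hstrict)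
    filter_upwards [hw_pos, hae] with x hwx hx
    exact mul_le_mul_of_nonneg_left hx hwx.le
  linarith

/-- Truncation-cut comparison lemma (core of the continuity proofs).
`Ω = Ω⁺ ∪ γ ∪ Ω⁻`, `σ` is the `H^{N−1}` surface measure on the interface `γ`,
`u⁺, u⁻` are the one-sided traces of `u` on `γ`, `w x = φ(x,ν^γ(x)) ≥ λ > 0`, and
`v` is obtained from `u` by replacing it with the constant `(t+s)/2` on `Ω⁻`.
Under the hypotheses `|u⁺ − (t+s)/2| ≤ |u⁺ − u⁻|` a.e. on `γ`, with strict
inequality on a set of positive measure, the jump formulas give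
`∫_Ω |Dv|_φ < ∫_Ω |Du|_φ`. -/
theorem truncation_cut_comparison {N : ℕ}
    (Ω Ωp Ωm γ : Set (EuclideanSpace ℝ (Fin N)))
    (hΩo : IsOpen Ω) (hΩb : Bornology.IsBounded Ω)
    (hOp : IsOpen Ωp) (hOm : IsOpen Ωm)
    (hdecomp : Ω = Ωp ∪ γ ∪ Ωm) (hd1 : Disjoint Ωp Ωm) (hd2 : Disjoint Ωp γ)
    (hd3 : Disjoint Ωm γ)
    -- the surface measure on the interface γ, of finite total mass
    (σ : Measure (EuclideanSpace ℝ (Fin N))) [IsFiniteMeasure σ] (hσγ : σ γᶜ = 0)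
    (hσ : σ = (μH[(N : ℝ) - 1]).restrict γ)
    -- anisotropic weight w x = φ(x, ν^γ(x)), bounded below by the ellipticity
    -- constant λ of the metric integrand
    (w : EuclideanSpace ℝ (Fin N) → ℝ)
    (lam : ℝ) (hlam : 0 < lam) (hw : ∀ᵐ x ∂σ, lam ≤ w x)
    -- t < s and the one-sided traces u⁺, u⁻ of u on γ, with u⁻ ≤ t < s ≤ u⁺
    (t s : ℝ) (hts : t < s)
    (up um : EuclideanSpace ℝ (Fin N) → ℝ)
    (hside : ∀ᵐ x ∂σ, um x ≤ t ∧ s ≤ up x)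
    -- the function u and the comparison function v
    (u v : EuclideanSpace ℝ (Fin N) → ℝ)
    (hv : v = fun x => if x ∈ Ωm then (t + s) / 2 else u x)
    -- the total variations over Ω, Ω⁺, Ω⁻ and the jump formulas
    (TVu TVv TVp TVm : ℝ) (hTVp : 0 ≤ TVp) (hTVm : 0 ≤ TVm)
    (hintu : Integrable (fun x => w x * |up x - um x|) σ)
    (hintv : Integrable (fun x => w x * |up x - (t + s) / 2|) σ)
    (hjumpu : TVu = TVp + (∫ x, w x * |up x - um x| ∂σ) + TVm)
    (hjumpv : TVv = TVp + ∫ x, w x * |up x - (t + s) / 2| ∂σ)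
    -- the comparison hypotheses
    (hae : ∀ᵐ x ∂σ, |up x - (t + s) / 2| ≤ |up x - um x|)
    (hstrict : σ {x | |up x - (t + s) / 2| < |up x - um x|} ≠ 0)
    -- u is not identically (t+s)/2 on Ω⁻
    (hnotconst : ¬ ∀ x ∈ Ωm, u x = (t + s) / 2) :
    TVv < TVu :=
  truncation_cut_comparison_general σ w lam hlam hw t s up um TVu TVv TVp TVm hTVm hintu hintv
    hjumpu hjumpv hae hstrict
end
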